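/- arXiv:2503.23340 — 7 statements merged into one kernel-verified Lean document; each statement's English description precedes it below -/
import Mathlib

section
/- Let U be a finite set, k ∈ ℕ, and let F_1, …, F_k : 2^U → ℝ each be monotonically non-increasing and supermodular. Then the function F : (k+1)^U → ℝ defined by F(𝐒) = F(S_1,…,S_k) = Σ_{i=1}^k F_i(S_i) is k-supermodular. -/
/-- A `k`-tuple of subsets is pairwise disjoint (i.e. it is an element of `(k+1)^U`). -/
def PwDisj {α : Type*} {k : ℕ} (S : Fin k → Finset α) : Prop :=
  ∀ i j : Fin k, i ≠ j → Disjoint (S i) (S j)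

/-- The meet `𝐒 ⊓ 𝐓`, with `i`-th component `S i ∩ T i`. -/
def kInf {α : Type*} [DecidableEq α] {k : ℕ} (S T : Fin k → Finset α) :
    Fin k → Finset α := fun i => S i ∩ T i

/-- The join `𝐒 ⊔ 𝐓`, with `i`-th component `(S i ∪ T i) \ ∪_{j ≠ i} (S j ∪ T j)`. -/
def kSup {α : Type*} [DecidableEq α] {k : ℕ} (S T : Fin k → Finset α) :
    Fin k → Finset α :=
  fun i => (S i ∪ T i) \ ((Finset.univ.erase i).biUnion fun j => S j ∪ T j)

theorem kSup_subset_union {α : Type*} [DecidableEq α] {k : ℕ} (S T : Fin k → Finset α)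
    (i : Fin k) : kSup S T i ⊆ S i ∪ T i :=
  Finset.sdiff_subset

theorem sum_of_antitone_supermodular_is_k_supermodular_general
    {α : Type*} [DecidableEq α] {k : ℕ}
    (F : Fin k → Finset α → ℝ)
    (hmono : ∀ i : Fin k, ∀ S T : Finset α, S ⊆ T → F i T ≤ F i S)
    (hsuper : ∀ i : Fin k, ∀ S T : Finset α,
      F i S + F i T ≤ F i (S ∩ T) + F i (S ∪ T)) :
    ∀ S T : Fin k → Finset α, PwDisj S → PwDisj T →
      (∑ i, F i (S i)) + (∑ i, F i (T i)) ≤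
        (∑ i, F i (kInf S T i)) + (∑ i, F i (kSup S T i)) := by
  intro S T _ _
  simp only [← Finset.sum_add_distrib]
  refine Finset.sum_le_sum fun i _ => ?_
  calc F i (S i) + F i (T i) ≤ F i (S i ∩ T i) + F i (S i ∪ T i) := hsuper i _ _
    _ ≤ F i (kInf S T i) + F i (kSup S T i) :=
      add_le_add_right (hmono i _ _ (kSup_subset_union S T i)) _

/-- If `F_1, …, F_k : 2^U → ℝ` are monotonically non-increasing and
supermodular, then `F(𝐒) = Σ_{i=1}^k F_i (S_i)` is `k`-supermodular on `(k+1)^U`. -/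
theorem sum_of_antitone_supermodular_is_k_supermodular
    {α : Type*} [Fintype α] [DecidableEq α] {k : ℕ}
    (F : Fin k → Finset α → ℝ)
    (hmono : ∀ i : Fin k, ∀ S T : Finset α, S ⊆ T → F i T ≤ F i S)
    (hsuper : ∀ i : Fin k, ∀ S T : Finset α,
      F i S + F i T ≤ F i (S ∩ T) + F i (S ∪ T)) :
    ∀ S T : Fin k → Finset α, PwDisj S → PwDisj T →
      (∑ i, F i (S i)) + (∑ i, F i (T i)) ≤
        (∑ i, F i (kInf S T i)) + (∑ i, F i (kSup S T i)) :=
  sum_of_antitone_supermodular_is_k_supermodular_general F hmono hsuper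
end

section
/- Let U be a finite set, k ∈ ℕ, and let G_1, …, G_k : 2^U → ℝ each be monotonically non-decreasing and submodular. Then the function G : (k+1)^U → ℝ defined by G(𝐒) = G(S_1,…,S_k) = Σ_{i=1}^k G_i(S_i) is k-submodular. -/
theorem add_le_add_of_submodular_of_le_sup {L β : Type*} [Lattice L] [AddCommMonoid β]
    [PartialOrder β] [IsOrderedAddMonoid β] {f : L → β} (hmono : Monotone f)
    (hsub : ∀ a b, f (a ⊓ b) + f (a ⊔ b) ≤ f a + f b) {a b c : L} (hc : c ≤ a ⊔ b) :
    f (a ⊓ b) + f c ≤ f a + f b :=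
  (add_le_add_right (hmono hc) _).trans (hsub a b)

theorem sum_of_monotone_submodular_is_k_submodular_general
    {α : Type*} [DecidableEq α] {k : ℕ}
    (G : Fin k → Finset α → ℝ)
    (hmono : ∀ i : Fin k, ∀ S T : Finset α, S ⊆ T → G i S ≤ G i T)
    (hsub : ∀ i : Fin k, ∀ S T : Finset α,
      G i (S ∩ T) + G i (S ∪ T) ≤ G i S + G i T) :
    ∀ S T : Fin k → Finset α, PwDisj S → PwDisj T →
      (∑ i, G i (kInf S T i)) + (∑ i, G i (kSup S T i)) ≤
        (∑ i, G i (S i)) + (∑ i, G i (T i)) := by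
  intro S T _ _
  rw [← Finset.sum_add_distrib, ← Finset.sum_add_distrib]
  exact Finset.sum_le_sum fun i _ =>
    add_le_add_of_submodular_of_le_sup (hmono i) (hsub i) (kSup_subset_union S T i)

/-- If `G_1, …, G_k : 2^U → ℝ` are monotonically non-decreasing and
submodular, then `G(𝐒) = Σ_{i=1}^k G_i (S_i)` is `k`-submodular on `(k+1)^U`. -/
theorem sum_of_monotone_submodular_is_k_submodular
    {α : Type*} [Fintype α] [DecidableEq α] {k : ℕ}
    (G : Fin k → Finset α → ℝ)
    (hmono : ∀ i : Fin k, ∀ S T : Finset α, S ⊆ T → G i S ≤ G i T)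
    (hsub : ∀ i : Fin k, ∀ S T : Finset α,
      G i (S ∩ T) + G i (S ∪ T) ≤ G i S + G i T) :
    ∀ S T : Fin k → Finset α, PwDisj S → PwDisj T →
      (∑ i, G i (kInf S T i)) + (∑ i, G i (kSup S T i)) ≤
        (∑ i, G i (S i)) + (∑ i, G i (T i)) :=
  sum_of_monotone_submodular_is_k_submodular_general G hmono hsub
end

section
/- Let U be a finite set, k ∈ ℕ, let f : (k+1)^U → ℝ be orthant submodular, let β ∈ ℝ and 𝐕 = (V_1,…,V_k) ∈ (k+1)^U. Define g on {𝐒 ∈ (k+1)^U : 𝐒 ≼ 𝐕} by g(𝐒) = f(𝐒) − β + Σ_{i=1}^k Σ_{e∈S_i} ( f(V_1,…,V_i \ {e},…,V_k) − f(V_1,…,V_i,…,V_k) ). Then g is k-submodular and monotonically non-decreasing (on tuples 𝐒 ≼ 𝐕). -/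
/-- The transformed function
`g(𝐒) = f(𝐒) − β + Σ_{i} Σ_{e ∈ S_i} ( f(V_1,…,V_i \ {e},…,V_k) − f(𝐕) )`. -/
noncomputable def transformed {α : Type*} [DecidableEq α] {k : ℕ}
    (f : (Fin k → Finset α) → ℝ) (β : ℝ) (V : Fin k → Finset α)
    (S : Fin k → Finset α) : ℝ :=
  f S - β + ∑ i, ∑ e ∈ S i, (f (Function.update V i (V i \ {e})) - f V)

/-!
Adding `e` to the `i`-th component of `𝐗` changes `g` by `Δ_{e,i} f(𝐗) − Δ_{e,i} f(𝐖)`, where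
`𝐖` is `𝐕` with `e` removed from `V_i`. So `g` inherits orthant submodularity from `f`, and it is
monotone below `𝐕` because `𝐗 ≼ 𝐖` there.

An orthant submodular function that is monotone on a box is `k`-submodular on it. Removing from
`𝐒` the elements that `𝐓` puts in another component, and vice versa, changes neither `𝐒 ⊓ 𝐓`
nor `𝐒 ⊔ 𝐓` and, by monotonicity, does not increase `g(𝐒) + g(𝐓)`. For such conflict-free pairs
`𝐒 ⊔ 𝐓` is the componentwise union, and the inequality is diminishing returns summed over the
elements of `𝐒 \ 𝐓`.
-/

open Finset Function

section Tuples

variable {ι α : Type*} [DecidableEq ι] [DecidableEq α]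

theorem Fintype.sum_apply_update_add [Fintype ι] {β M : Type*} [AddCommMonoid M]
    (F : ι → β → M) (X : ι → β) (i : ι) (b : β) :
    ∑ j, F j (update X i b j) + F i (X i) = ∑ j, F j (X j) + F i b := by
  simp only [apply_update F X i b]
  rw [sum_update_of_mem (mem_univ i),
    sum_eq_add_sum_sdiff_singleton_of_mem (mem_univ i)]
  ac_rfl

theorem sup_update_insert (A Z : ι → Finset α) (i : ι) (e : α) :
    A ⊔ update Z i (insert e (Z i)) = update (A ⊔ Z) i (insert e ((A ⊔ Z) i)) := by
  funext j
  rcases eq_or_ne j i with rfl | hji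
  · simp [Finset.union_insert]
  · simp [hji]

theorem le_update_insert (X : ι → Finset α) (i : ι) (e : α) : X ≤ update X i (insert e (X i)) := by
  intro j
  rcases eq_or_ne j i with rfl | hji
  · simp [subset_insert]
  · simp [hji]

theorem Finset.induction_on_pi_update [Fintype ι] {P : (ι → Finset α) → Prop} (bot : P ⊥)
    (update_insert : ∀ S i e, e ∉ S i → P S → P (update S i (insert e (S i))))
    (S : ι → Finset α) : P S := by
  induction h : ∑ i, #(S i) generalizing S with
  | zero =>
    convert bot
    funext i
    exact card_eq_zero.mp (sum_eq_zero_iff.mp h i (mem_univ i))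
  | succ n ih =>
    obtain ⟨i, -, hi⟩ := exists_ne_zero_of_sum_ne_zero (h.trans_ne n.succ_ne_zero)
    obtain ⟨e, he⟩ := card_pos.mp (Nat.pos_of_ne_zero hi)
    have hS : update (update S i ((S i).erase e)) i
        (insert e (update S i ((S i).erase e) i)) = S := by
      rw [update_self, update_idem, insert_erase he, update_eq_self]
    have hcard := Fintype.sum_apply_update_add (fun _ s => #s) S i ((S i).erase e)
    have hcard_erase := card_erase_add_one he
    rw [← hS]
    exact update_insert _ i e (by simp) (ih _ (by omega))

theorem monotoneOn_Iic_of_le_update_insert [Fintype ι] {β : Type*} [Preorder β]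
    {h : (ι → Finset α) → β} {V : ι → Finset α}
    (hstep : ∀ X ≤ V, ∀ i e, e ∈ V i → e ∉ X i → h X ≤ h (update X i (insert e (X i)))) :
    MonotoneOn h (Set.Iic V) := by
  intro S _ T (hTV : T ≤ V) hST
  suffices ∀ Z, S ⊔ Z ≤ V → h S ≤ h (S ⊔ Z) by
    simpa [sup_eq_right.mpr hST] using this T (sup_le (hST.trans hTV) hTV)
  intro Z
  induction Z using Finset.induction_on_pi_update with
  | bot => simp
  | update_insert Z i e _ ih =>
    rw [sup_update_insert]
    intro hV
    have hZV : S ⊔ Z ≤ V := (le_update_insert _ i e).trans hV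
    refine (ih hZV).trans ?_
    by_cases he : e ∈ (S ⊔ Z) i
    · rw [insert_eq_of_mem he, update_eq_self]
    · exact hstep _ hZV i e (hV i (by simp)) he

end Tuples

section OrthantSubmodular

variable {α : Type*} {k : ℕ}

theorem PwDisj.mono {S T : Fin k → Finset α} (hT : PwDisj T) (hST : S ≤ T) : PwDisj S :=
  fun i j hij => (hT i j hij).mono (hST i) (hST j)

theorem PwDisj.notMem_of_mem {S : Fin k → Finset α} (hS : PwDisj S) {i j : Fin k} {e : α}
    (he : e ∈ S i) (hji : j ≠ i) : e ∉ S j :=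
  fun he' => disjoint_left.mp (hS j i hji) he' he

variable [DecidableEq α]

def OrthantSubmodular (h : (Fin k → Finset α) → ℝ) : Prop :=
  ∀ S T : Fin k → Finset α, PwDisj S → PwDisj T → S ≤ T → ∀ (i : Fin k) (e : α),
    e ∉ univ.biUnion T →
      h (update T i (insert e (T i))) - h T ≤ h (update S i (insert e (S i))) - h S

theorem OrthantSubmodular.sub_le_sub_sup {h : (Fin k → Finset α) → ℝ} (hh : OrthantSubmodular h)
    {X Y : Fin k → Finset α} (hXY : X ≤ Y) (Z : Fin k → Finset α) (hYZ : PwDisj (Y ⊔ Z))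
    (hZY : ∀ i j, Disjoint (Z i) (Y j)) : h (Y ⊔ Z) - h Y ≤ h (X ⊔ Z) - h X := by
  induction Z using Finset.induction_on_pi_update with
  | bot => simp
  | update_insert Z i e heZ ih =>
    have hZ := le_update_insert Z i e
    have heZ' : e ∈ update Z i (insert e (Z i)) i := by simp
    have hsupp : e ∉ univ.biUnion (Y ⊔ Z) := by
      simp only [mem_biUnion, mem_univ, true_and, not_exists]
      intro j
      rcases eq_or_ne j i with rfl | hji
      · simpa [heZ] using disjoint_left.mp (hZY j j) heZ'
      · exact fun he => hYZ.notMem_of_mem (mem_union.mpr (Or.inr heZ')) hji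
          (sup_le_sup_left hZ Y j he)
    have hYZ' : PwDisj (Y ⊔ Z) := hYZ.mono (sup_le_sup_left hZ Y)
    have step := hh (X ⊔ Z) (Y ⊔ Z) (hYZ'.mono (sup_le_sup_right hXY Z)) hYZ'
      (sup_le_sup_right hXY Z) i e hsupp
    have := ih hYZ' fun i j => (hZY i j).mono_left (hZ i)
    rw [sup_update_insert, sup_update_insert]
    linarith

theorem OrthantSubmodular.inf_add_sup_le {h : (Fin k → Finset α) → ℝ} (hh : OrthantSubmodular h)
    {S T : Fin k → Finset α} (hS : PwDisj S) (hT : PwDisj T)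
    (hST : ∀ i j, i ≠ j → Disjoint (S i) (T j)) : h (S ⊓ T) + h (S ⊔ T) ≤ h S + h T := by
  have hTS : PwDisj (T ⊔ S) := fun i j hij =>
    disjoint_union_left.mpr ⟨disjoint_union_right.mpr ⟨hT i j hij, (hST j i hij.symm).symm⟩,
      disjoint_union_right.mpr ⟨hST i j hij, hS i j hij⟩⟩
  have hZ : ∀ i j, Disjoint ((S \ T) i) (T j) := by
    intro i j
    rcases eq_or_ne i j with rfl | hij
    · exact disjoint_sdiff_self_left
    · exact (hST i j hij).mono_left sdiff_subset
  have := hh.sub_le_sub_sup (inf_le_right : S ⊓ T ≤ T) (S \ T) (by rwa [sup_sdiff_self]) hZ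
  rw [sup_inf_sdiff, sup_sdiff_self, sup_comm] at this
  linarith

end OrthantSubmodular

section Conflicts

variable {α : Type*} [DecidableEq α] {k : ℕ}

theorem mem_kSup {S T : Fin k → Finset α} {i : Fin k} {x : α} :
    x ∈ kSup S T i ↔ (x ∈ S i ∨ x ∈ T i) ∧ ∀ j, j ≠ i → x ∉ S j ∧ x ∉ T j := by
  simp [kSup, not_or]

def dropConflicts (S T : Fin k → Finset α) : Fin k → Finset α :=
  fun i => S i \ (univ.erase i).biUnion T

theorem mem_dropConflicts {S T : Fin k → Finset α} {i : Fin k} {x : α} :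
    x ∈ dropConflicts S T i ↔ x ∈ S i ∧ ∀ j, j ≠ i → x ∉ T j := by
  simp [dropConflicts]

theorem dropConflicts_le (S T : Fin k → Finset α) : dropConflicts S T ≤ S :=
  fun _ => sdiff_subset

theorem disjoint_dropConflicts (S T : Fin k → Finset α) {i j : Fin k} (hij : i ≠ j) :
    Disjoint (dropConflicts S T i) (dropConflicts T S j) :=
  disjoint_left.mpr fun _ hS hT =>
    (mem_dropConflicts.mp hS).2 j hij.symm (dropConflicts_le T S j hT)

theorem kInf_eq_inf_dropConflicts {S T : Fin k → Finset α} (hS : PwDisj S) (hT : PwDisj T) :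
    kInf S T = dropConflicts S T ⊓ dropConflicts T S := by
  funext i
  ext x
  simp only [kInf, Pi.inf_apply, inf_eq_inter, mem_inter, mem_dropConflicts]
  constructor
  · rintro ⟨hxS, hxT⟩
    exact ⟨⟨hxS, fun j hj => hT.notMem_of_mem hxT hj⟩, hxT, fun j hj => hS.notMem_of_mem hxS hj⟩
  · rintro ⟨⟨hxS, -⟩, hxT, -⟩
    exact ⟨hxS, hxT⟩

theorem kSup_eq_sup_dropConflicts {S T : Fin k → Finset α} (hS : PwDisj S) (hT : PwDisj T) :
    kSup S T = dropConflicts S T ⊔ dropConflicts T S := by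
  funext i
  ext x
  simp only [mem_kSup, Pi.sup_apply, sup_eq_union, mem_union, mem_dropConflicts]
  constructor
  · rintro ⟨hxS | hxT, hx⟩
    · exact Or.inl ⟨hxS, fun j hj => (hx j hj).2⟩
    · exact Or.inr ⟨hxT, fun j hj => (hx j hj).1⟩
  · rintro (⟨hxS, hx⟩ | ⟨hxT, hx⟩)
    · exact ⟨Or.inl hxS, fun j hj => ⟨hS.notMem_of_mem hxS hj, hx j hj⟩⟩
    · exact ⟨Or.inr hxT, fun j hj => ⟨hx j hj, hT.notMem_of_mem hxT hj⟩⟩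

end Conflicts

theorem OrthantSubmodular.kInf_add_kSup_le {α : Type*} [DecidableEq α] {k : ℕ}
    {h : (Fin k → Finset α) → ℝ} (hh : OrthantSubmodular h) {V : Fin k → Finset α}
    (hmono : MonotoneOn h (Set.Iic V)) {S T : Fin k → Finset α} (hS : PwDisj S) (hT : PwDisj T)
    (hSV : S ≤ V) (hTV : T ≤ V) : h (kInf S T) + h (kSup S T) ≤ h S + h T := by
  rw [kInf_eq_inf_dropConflicts hS hT, kSup_eq_sup_dropConflicts hS hT]
  calc _ ≤ h (dropConflicts S T) + h (dropConflicts T S) :=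
        hh.inf_add_sup_le (hS.mono (dropConflicts_le S T)) (hT.mono (dropConflicts_le T S))
          fun i j => disjoint_dropConflicts S T
    _ ≤ h S + h T := add_le_add
        (hmono ((dropConflicts_le S T).trans hSV) hSV (dropConflicts_le S T))
        (hmono ((dropConflicts_le T S).trans hTV) hTV (dropConflicts_le T S))

section Transformed

variable {α : Type*} [DecidableEq α] {k : ℕ} (f : (Fin k → Finset α) → ℝ) (β : ℝ)
  (V : Fin k → Finset α)

theorem transformed_update_insert (X : Fin k → Finset α) (i : Fin k) {e : α} (he : e ∉ X i) :
    transformed f β V (update X i (insert e (X i))) = transformed f β V X +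
      (f (update X i (insert e (X i))) - f X) + (f (update V i (V i \ {e})) - f V) := by
  have := Fintype.sum_apply_update_add (fun j A => ∑ e ∈ A, (f (update V j (V j \ {e})) - f V))
    X i (insert e (X i))
  simp only [sum_insert he] at this
  unfold transformed
  linarith

variable {f}

theorem OrthantSubmodular.transformed (hf : OrthantSubmodular f) :
    OrthantSubmodular (transformed f β V) := by
  intro S T hS hT hST i e he
  have heT : e ∉ T i := fun h => he (mem_biUnion.mpr ⟨i, mem_univ i, h⟩)
  rw [transformed_update_insert f β V S i fun h => heT (hST i h),
    transformed_update_insert f β V T i heT]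
  linarith [hf S T hS hT hST i e he]

variable {V}

theorem transformed_monotoneOn (hf : OrthantSubmodular f) (hV : PwDisj V) :
    MonotoneOn (transformed f β V) (Set.Iic V) := by
  refine monotoneOn_Iic_of_le_update_insert fun X hXV i e heV heX => ?_
  set W := update V i (V i \ {e})
  have hWV : W ≤ V := by
    intro j
    rcases eq_or_ne j i with rfl | hji
    · simp [W]
    · simp [W, hji]
  have hXW : X ≤ W := by
    intro j
    rcases eq_or_ne j i with rfl | hji
    · simpa [W, subset_sdiff] using ⟨hXV j, heX⟩
    · simpa [W, hji] using hXV j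
  have heW : e ∉ univ.biUnion W := by
    simp only [mem_biUnion, mem_univ, true_and, not_exists]
    intro j
    rcases eq_or_ne j i with rfl | hji
    · simp [W]
    · simpa [W, hji] using hV.notMem_of_mem heV hji
  have hW : update W i (insert e (W i)) = V := by
    simp [W, sdiff_singleton_eq_erase, insert_erase heV]
  have := hf X W (hV.mono (hXW.trans hWV)) (hV.mono hWV) hXW i e heW
  rw [hW] at this
  rw [transformed_update_insert f β V X i heX]
  linarith

end Transformed

theorem transformed_k_submodular_and_monotone_general
    {α : Type*} [DecidableEq α] {k : ℕ}
    (f : (Fin k → Finset α) → ℝ)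
    (horth : ∀ S T : Fin k → Finset α, PwDisj S → PwDisj T →
      (∀ i, S i ⊆ T i) → ∀ (i : Fin k) (e : α), e ∉ Finset.univ.biUnion T →
        f (Function.update T i (insert e (T i))) - f T ≤
          f (Function.update S i (insert e (S i))) - f S)
    (β : ℝ) (V : Fin k → Finset α) (hV : PwDisj V) :
    (∀ S T : Fin k → Finset α, PwDisj S → PwDisj T →
        (∀ i, S i ⊆ V i) → (∀ i, T i ⊆ V i) →
        transformed f β V (kInf S T) + transformed f β V (kSup S T) ≤
          transformed f β V S + transformed f β V T) ∧
    (∀ S T : Fin k → Finset α, PwDisj S → PwDisj T →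
        (∀ i, S i ⊆ T i) → (∀ i, T i ⊆ V i) →
        transformed f β V S ≤ transformed f β V T) := by
  have hf : OrthantSubmodular f := horth
  have hmono := transformed_monotoneOn β hf hV
  exact ⟨fun S T hS hT hSV hTV => (hf.transformed β V).kInf_add_kSup_le hmono hS hT hSV hTV,
    fun S T _ _ hST hTV => hmono (le_trans (b := T) hST hTV) hTV hST⟩

/-- If `f : (k+1)^U → ℝ` is orthant submodular, `β ∈ ℝ` and
`𝐕 ∈ (k+1)^U`, then the transformed function `g` is `k`-submodular and monotonically
non-decreasing on `{𝐒 : 𝐒 ≼ 𝐕}`. -/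
theorem transformed_k_submodular_and_monotone
    {α : Type*} [Fintype α] [DecidableEq α] {k : ℕ}
    (f : (Fin k → Finset α) → ℝ)
    (horth : ∀ S T : Fin k → Finset α, PwDisj S → PwDisj T →
      (∀ i, S i ⊆ T i) → ∀ (i : Fin k) (e : α), e ∉ Finset.univ.biUnion T →
        f (Function.update T i (insert e (T i))) - f T ≤
          f (Function.update S i (insert e (S i))) - f S)
    (β : ℝ) (V : Fin k → Finset α) (hV : PwDisj V) :
    (∀ S T : Fin k → Finset α, PwDisj S → PwDisj T →
        (∀ i, S i ⊆ V i) → (∀ i, T i ⊆ V i) →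
        transformed f β V (kInf S T) + transformed f β V (kSup S T) ≤
          transformed f β V S + transformed f β V T) ∧
    (∀ S T : Fin k → Finset α, PwDisj S → PwDisj T →
        (∀ i, S i ⊆ T i) → (∀ i, T i ⊆ V i) →
        transformed f β V S ≤ transformed f β V T) :=
  transformed_k_submodular_and_monotone_general f horth β V hV
end

section
/- In the setting of the generalized distorted greedy algorithm, define for 0 ≤ i ≤ m−1 the distorted objective Φ_i(𝐒) = (1 − 1/m)^{m−i} g(𝐒) − c(𝐒) and Ψ_i(𝐒, j, e) = max{0, (1 − 1/m)^{m−(i+1)} Δ_{e,j} g(𝐒) − c({e})}. Let 𝐒_i ≼ 𝐕, let (j*, e*) maximize (1 − 1/m)^{m−(i+1)} Δ_{e,j} g(𝐒_i) − c({e}) over j ∈ ⟦k⟧ and e ∈ V_j \ S_{i,j}, and let 𝐒_{i+1} be the algorithm's update (S_{i+1,j*} = S_{i,j*} ∪ {e*} and S_{i+1,l} = S_{i,l} for l ≠ j* if this maximal quantity is > 0, and 𝐒_{i+1} = 𝐒_i otherwise). Then Φ_{i+1}(𝐒_{i+1}) − Φ_i(𝐒_i) = Ψ_i(𝐒_i,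 j*, e*) + (1/m)(1 − 1/m)^{m−(i+1)} g(𝐒_i). -/
/-- The value of the modular function determined by the singleton costs `c` on a tuple. -/
def cSet {α : Type*} {k : ℕ} (c : α → ℝ) (S : Fin k → Finset α) : ℝ :=
  ∑ i, ∑ e ∈ S i, c e

/-- The distorted marginal quantity
`(1 − 1/m)^{m−(i+1)} Δ_{e,j} g(𝐒) − c({e})` at step `i`. -/
noncomputable def qGain {α : Type*} [DecidableEq α] {k : ℕ}
    (g : (Fin k → Finset α) → ℝ) (c : α → ℝ) (m i : ℕ)
    (S : Fin k → Finset α) (j : Fin k) (e : α) : ℝ :=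
  ((1 : ℝ) - 1 / (m : ℝ)) ^ (m - (i + 1)) *
      (g (Function.update S j (insert e (S j))) - g S) - c e

/-- The distorted objective `Φ_i(𝐒) = (1 − 1/m)^{m−i} g(𝐒) − c(𝐒)`. -/
noncomputable def Phi {α : Type*} {k : ℕ}
    (g : (Fin k → Finset α) → ℝ) (c : α → ℝ) (m i : ℕ)
    (S : Fin k → Finset α) : ℝ :=
  ((1 : ℝ) - 1 / (m : ℝ)) ^ (m - i) * g S - cSet c S

/-- `Ψ_i(𝐒, j, e) = max {0, (1 − 1/m)^{m−(i+1)} Δ_{e,j} g(𝐒) − c({e})}`. -/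
noncomputable def Psi {α : Type*} [DecidableEq α] {k : ℕ}
    (g : (Fin k → Finset α) → ℝ) (c : α → ℝ) (m i : ℕ)
    (S : Fin k → Finset α) (j : Fin k) (e : α) : ℝ :=
  max 0 (qGain g c m i S j e)

/-!
Write `Φ_{i+1}(𝐒_{i+1}) − Φ_i(𝐒_i)` as `(Φ_{i+1}(𝐒_{i+1}) − Φ_{i+1}(𝐒_i)) + (Φ_{i+1}(𝐒_i) − Φ_i(𝐒_i))`.
Advancing the index from `i` to `i + 1` at a fixed tuple drops one factor `1 - 1/m`
from the weight of `g`, which adds `(1/m)(1 - 1/m)^{m-(i+1)} g(𝐒)` to `Φ`. Adding `e` to the `j`-th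
set at a fixed index `i + 1` changes `Φ_{i+1}` by exactly the distorted gain, because `c` is
modular; the algorithm adds `e*` precisely when that gain is positive, which accounts for
the `max 0` in `Ψ`.
-/

section DistortedObjective

variable {α : Type*} {k : ℕ} (g : (Fin k → Finset α) → ℝ) (c : α → ℝ)

theorem cSet_update_insert [DecidableEq α] {S : Fin k → Finset α} {j : Fin k} {e : α}
    (he : e ∉ S j) :
    cSet c (Function.update S j (insert e (S j))) = cSet c S + c e := by
  have hsum : ∀ T : Fin k → Finset α, cSet c T = ∑ e ∈ T j, c e + ∑ l ∈ {j}ᶜ, ∑ e ∈ T l, c e :=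
    fun T => Fintype.sum_eq_add_sum_compl j _
  rw [hsum, hsum S, Function.update_self, Finset.sum_insert he]
  have hrest : ∀ l ∈ ({j}ᶜ : Finset (Fin k)),
      ∑ e ∈ Function.update S j (insert e (S j)) l, c e = ∑ e ∈ S l, c e := fun l hl => by
    rw [Function.update_of_ne (Finset.mem_compl.mp hl ∘ Finset.mem_singleton.mpr)]
  rw [Finset.sum_congr rfl hrest]
  ring

theorem Phi_succ_sub_Phi {m i : ℕ} (hi : i < m) (S : Fin k → Finset α) :
    Phi g c m (i + 1) S - Phi g c m i S =
      (1 / (m : ℝ)) * ((1 : ℝ) - 1 / (m : ℝ)) ^ (m - (i + 1)) * g S := by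
  rw [Phi, Phi, show m - i = m - (i + 1) + 1 by omega, pow_succ]
  ring

theorem Phi_update_insert [DecidableEq α] (m i : ℕ) {S : Fin k → Finset α} {j : Fin k} {e : α}
    (he : e ∉ S j) :
    Phi g c m (i + 1) (Function.update S j (insert e (S j))) =
      Phi g c m (i + 1) S + qGain g c m i S j e := by
  rw [Phi, Phi, qGain, cSet_update_insert c he]
  ring

end DistortedObjective

theorem distorted_objective_difference_general
    {α : Type*} [DecidableEq α] {k : ℕ}
    (g : (Fin k → Finset α) → ℝ) (c : α → ℝ)
    (m : ℕ) (V : Fin k → Finset α)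
    (i : ℕ) (hi : i < m)
    (Si Snext : Fin k → Finset α)
    (jstar : Fin k) (estar : α)
    (hmem : estar ∈ V jstar \ Si jstar)
    (hpos : 0 < qGain g c m i Si jstar estar →
      Snext = Function.update Si jstar (insert estar (Si jstar)))
    (hnonpos : ¬ 0 < qGain g c m i Si jstar estar → Snext = Si) :
    Phi g c m (i + 1) Snext - Phi g c m i Si =
      Psi g c m i Si jstar estar +
        (1 / (m : ℝ)) * ((1 : ℝ) - 1 / (m : ℝ)) ^ (m - (i + 1)) * g Si := by
  have hstep : Phi g c m (i + 1) Snext = Phi g c m (i + 1) Si + Psi g c m i Si jstar estar := by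
    by_cases hgain : 0 < qGain g c m i Si jstar estar
    · rw [hpos hgain, Phi_update_insert g c m i (Finset.mem_sdiff.mp hmem).2, Psi,
        max_eq_right hgain.le]
    · rw [hnonpos hgain, Psi, max_eq_left (not_lt.mp hgain), add_zero]
  rw [hstep, ← Phi_succ_sub_Phi g c hi Si]
  ring

/-- One-step evolution of the distorted objective:
`Φ_{i+1}(𝐒_{i+1}) − Φ_i(𝐒_i) = Ψ_i(𝐒_i, j*, e*) + (1/m)(1 − 1/m)^{m−(i+1)} g(𝐒_i)`. -/
theorem distorted_objective_difference
    {α : Type*} [Fintype α] [DecidableEq α] {k : ℕ}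
    (g : (Fin k → Finset α) → ℝ) (c : α → ℝ) (hc : ∀ e : α, 0 ≤ c e)
    (m : ℕ) (hm : 1 ≤ m) (V : Fin k → Finset α) (hV : PwDisj V)
    (i : ℕ) (hi : i < m)
    (Si Snext : Fin k → Finset α) (hSdisj : PwDisj Si) (hSV : ∀ j, Si j ⊆ V j)
    (jstar : Fin k) (estar : α)
    (hmem : estar ∈ V jstar \ Si jstar)
    (hmax : ∀ j : Fin k, ∀ e ∈ V j \ Si j,
      qGain g c m i Si j e ≤ qGain g c m i Si jstar estar)
    (hpos : 0 < qGain g c m i Si jstar estar →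
      Snext = Function.update Si jstar (insert estar (Si jstar)))
    (hnonpos : ¬ 0 < qGain g c m i Si jstar estar → Snext = Si) :
    Phi g c m (i + 1) Snext - Phi g c m i Si =
      Psi g c m i Si jstar estar +
        (1 / (m : ℝ)) * ((1 : ℝ) - 1 / (m : ℝ)) ^ (m - (i + 1)) * g Si :=
  distorted_objective_difference_general g c m V i hi Si Snext jstar estar hmem hpos hnonpos
end

section
/- Let P be a π-stationary transition matrix on the finite product state space X = X^(1) × … × X^(d), let k ∈ ℕ, and define f(𝐒) = 𝕀(⊗_{i=1}^k P^(S_i)) = Σ_{i=1}^k 𝕀(P^(S_i)) on (k+1)^⟦d⟧. Then f is pairwise monotonically non-decreasing: for every 𝐒 ∈ (k+1)^⟦d⟧, every e ∉ supp(𝐒), and every pair i ≠ j in ⟦k⟧, one has Δ_{e,i} f(𝐒) + Δ_{e,j} f(𝐒) ≥ 0; indeed Δ_{e,i} f(𝐒) + Δ_{e,j} f(𝐒) = D(P^(S_i ∪ {e}) ‖ P^(S_i) ⊗ P^(e)) + D(P^(S_j ∪ {e}) ‖ P^(S_j) ⊗ P^(e)) ≥ 0. -/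
open scoped Classical

noncomputable section

variable {d : ℕ}

/-- Restriction of a global state to the coordinates in `S`. -/
def restrict (𝒳 : Fin d → Type) (S : Finset (Fin d)) (x : ∀ i, 𝒳 i) :
    ∀ i : S, 𝒳 i.1 := fun i => x i.1

/-- Marginal of `π` on the coordinates in `S`. -/
def marginal (𝒳 : Fin d → Type) [∀ i, Fintype (𝒳 i)]
    (π : (∀ i, 𝒳 i) → ℝ) (S : Finset (Fin d)) (z : ∀ i : S, 𝒳 i.1) : ℝ :=
  ∑ x : ∀ i, 𝒳 i, if restrict 𝒳 S x = z then π x else 0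

/-- Keep-`S`-in transition matrix of `P` with respect to `π`. -/
def keepIn (𝒳 : Fin d → Type) [∀ i, Fintype (𝒳 i)]
    (π : (∀ i, 𝒳 i) → ℝ) (P : (∀ i, 𝒳 i) → (∀ i, 𝒳 i) → ℝ)
    (S : Finset (Fin d)) (z w : ∀ i : S, 𝒳 i.1) : ℝ :=
  (∑ x : ∀ i, 𝒳 i, ∑ y : ∀ i, 𝒳 i,
      if restrict 𝒳 S x = z ∧ restrict 𝒳 S y = w then π x * P x y else 0) /
    marginal 𝒳 π S z

/-- Entropy rate of a transition matrix `M` with respect to `μ`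
    (with the convention `0 ln 0 = 0`). -/
def entRate {Y : Type*} [Fintype Y] (μ : Y → ℝ) (M : Y → Y → ℝ) : ℝ :=
  -∑ x, ∑ y, μ x * M x y * Real.log (M x y)

/-- KL divergence rate from `L` to `M` with respect to `μ`
    (with the convention `0 ln (0/a) = 0`). -/
def klRate {Y : Type*} [Fintype Y] (μ : Y → ℝ) (M L : Y → Y → ℝ) : ℝ :=
  ∑ x, ∑ y, μ x * M x y * Real.log (M x y / L x y)

/-- Keep-`{i}`-in single-coordinate transition matrix `P^(i)`. -/
def single (𝒳 : Fin d → Type) [∀ i, Fintype (𝒳 i)]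
    (π : (∀ i, 𝒳 i) → ℝ) (P : (∀ i, 𝒳 i) → (∀ i, 𝒳 i) → ℝ)
    (i : Fin d) (a b : 𝒳 i) : ℝ :=
  (∑ x : ∀ j, 𝒳 j, ∑ y : ∀ j, 𝒳 j, if x i = a ∧ y i = b then π x * P x y else 0) /
    (∑ x : ∀ j, 𝒳 j, if x i = a then π x else 0)

/-- Tensor product over `S` of the single-coordinate matrices `P^(i)`, `i ∈ S`. -/
def indepKernel (𝒳 : Fin d → Type) [∀ i, Fintype (𝒳 i)]
    (π : (∀ i, 𝒳 i) → ℝ) (P : (∀ i, 𝒳 i) → (∀ i, 𝒳 i) → ℝ)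
    (S : Finset (Fin d)) (z w : ∀ i : S, 𝒳 i.1) : ℝ :=
  ∏ i : S, single 𝒳 π P i.1 (z i) (w i)

/-- Distance to independence `𝕀(P^(S)) = D(P^(S) ‖ ⊗_{i ∈ S} P^(i))`. -/
def distToIndep (𝒳 : Fin d → Type) [∀ i, Fintype (𝒳 i)]
    (π : (∀ i, 𝒳 i) → ℝ) (P : (∀ i, 𝒳 i) → (∀ i, 𝒳 i) → ℝ)
    (S : Finset (Fin d)) : ℝ :=
  klRate (marginal 𝒳 π S) (keepIn 𝒳 π P S) (indepKernel 𝒳 π P S)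

/-- Entropy rate `H(P^(S))` of the keep-`S`-in transition matrix. -/
def entKeepIn (𝒳 : Fin d → Type) [∀ i, Fintype (𝒳 i)]
    (π : (∀ i, 𝒳 i) → ℝ) (P : (∀ i, 𝒳 i) → (∀ i, 𝒳 i) → ℝ)
    (S : Finset (Fin d)) : ℝ :=
  entRate (marginal 𝒳 π S) (keepIn 𝒳 π P S)

/-- Distance to stationarity `D(P^(S) ‖ Π^(S))`, where every row of `Π^(S)` is `π^(S)`. -/
def distToStat (𝒳 : Fin d → Type) [∀ i, Fintype (𝒳 i)]
    (π : (∀ i, 𝒳 i) → ℝ) (P : (∀ i, 𝒳 i) → (∀ i, 𝒳 i) → ℝ)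
    (S : Finset (Fin d)) : ℝ :=
  klRate (marginal 𝒳 π S) (keepIn 𝒳 π P S) (fun _ w => marginal 𝒳 π S w)

/-- Single-coordinate marginal `π^(i)`. -/
def singleMarginal (𝒳 : Fin d → Type) [∀ i, Fintype (𝒳 i)]
    (π : (∀ i, 𝒳 i) → ℝ) (i : Fin d) (a : 𝒳 i) : ℝ :=
  ∑ x : ∀ j, 𝒳 j, if x i = a then π x else 0


/-- The kernel `P^(S) ⊗ P^(e)`, viewed (after reordering coordinates) as a transition
matrix on `X^(S ∪ {e})`. -/
def splitKernel (𝒳 : Fin d → Type) [∀ i, Fintype (𝒳 i)]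
    (π : (∀ i, 𝒳 i) → ℝ) (P : (∀ i, 𝒳 i) → (∀ i, 𝒳 i) → ℝ)
    (S : Finset (Fin d)) (e : Fin d)
    (z w : ∀ i : (insert e S : Finset (Fin d)), 𝒳 i.1) : ℝ :=
  keepIn 𝒳 π P S (fun j => z ⟨j.1, Finset.mem_insert_of_mem j.2⟩)
      (fun j => w ⟨j.1, Finset.mem_insert_of_mem j.2⟩) *
    single 𝒳 π P e (z ⟨e, Finset.mem_insert_self e S⟩) (w ⟨e, Finset.mem_insert_self e S⟩)

/-- The divergence `D(P^(S ∪ {e}) ‖ P^(S) ⊗ P^(e))`, computed with respect to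
`π^(S ∪ {e})`. -/
def dSplit (𝒳 : Fin d → Type) [∀ i, Fintype (𝒳 i)]
    (π : (∀ i, 𝒳 i) → ℝ) (P : (∀ i, 𝒳 i) → (∀ i, 𝒳 i) → ℝ)
    (S : Finset (Fin d)) (e : Fin d) : ℝ :=
  klRate (marginal 𝒳 π (insert e S)) (keepIn 𝒳 π P (insert e S)) (splitKernel 𝒳 π P S e)

/-! Adding `e` to the block `S_i` changes only the `i`-th summand of `f`, and by the chain rule
`𝕀(P^(S ∪ {e})) = 𝕀(P^(S)) + D(P^(S ∪ {e}) ‖ P^(S) ⊗ P^(e))` for `e ∉ S` that change is a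
divergence, hence nonnegative by Gibbs' inequality. The chain rule holds term by term: on the
support of the edge law `π^(S ∪ {e})(z) P^(S ∪ {e})(z, w)`, the log-ratios of `P^(S ∪ {e})` against
`⊗_{i ∈ S ∪ {e}} P^(i)` and against `P^(S) ⊗ P^(e)` differ by the log-ratio of `P^(S)` against
`⊗_{i ∈ S} P^(i)`. -/

open Finset

theorem sub_le_mul_log_div {m l : ℝ} (hm : 0 ≤ m) (hl : 0 ≤ l) (hml : m ≠ 0 → l ≠ 0) :
    m - l ≤ m * Real.log (m / l) := by
  rcases hm.eq_or_lt with rfl | hm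
  · simpa using hl
  have hl : 0 < l := hl.lt_of_ne' (hml hm.ne')
  have key := Real.one_sub_inv_le_log_of_pos (div_pos hm hl)
  rw [inv_div] at key
  calc m - l = m * (1 - l / m) := by field_simp
    _ ≤ m * Real.log (m / l) := mul_le_mul_of_nonneg_left key hm.le

theorem klRate_nonneg {Y : Type*} [Fintype Y] {μ : Y → ℝ} {M L : Y → Y → ℝ}
    (hμ : ∀ x, 0 ≤ μ x) (hM : ∀ x y, 0 ≤ M x y) (hL : ∀ x y, 0 ≤ L x y)
    (hrow : ∀ x, ∑ y, L x y ≤ ∑ y, M x y) (hML : ∀ x y, M x y ≠ 0 → L x y ≠ 0) :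
    0 ≤ klRate μ M L := by
  refine sum_nonneg fun x _ => ?_
  simp_rw [mul_assoc, ← mul_sum]
  refine mul_nonneg (hμ x) ?_
  calc (0 : ℝ) ≤ ∑ y, (M x y - L x y) := by rw [sum_sub_distrib]; linarith [hrow x]
    _ ≤ ∑ y, M x y * Real.log (M x y / L x y) :=
      sum_le_sum fun y _ => sub_le_mul_log_div (hM x y) (hL x y) (hML x y)

section Projection

variable {α β γ : Type*} [Fintype α] [DecidableEq β] (r : α → β) (π : α → ℝ) (P : α → α → ℝ)

def projMass (z : β) : ℝ :=
  ∑ x, if r x = z then π x else 0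

def projEdgeMass (z w : β) : ℝ :=
  ∑ x, ∑ y, if r x = z ∧ r y = w then π x * P x y else 0

def projKernel (z w : β) : ℝ :=
  projEdgeMass r π P z w / projMass r π z

variable {r π P}

theorem projMass_pos (hπ : ∀ x, 0 < π x) (hr : Function.Surjective r) (z : β) :
    0 < projMass r π z := by
  obtain ⟨x, rfl⟩ := hr z
  refine sum_pos' (fun y _ => ?_) ⟨x, mem_univ x, by simpa using hπ x⟩
  split_ifs
  exacts [(hπ y).le, le_rfl]

theorem projEdgeMass_nonneg (hπ : ∀ x, 0 ≤ π x) (hP : ∀ x y, 0 ≤ P x y) (z w : β) :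
    0 ≤ projEdgeMass r π P z w :=
  sum_nonneg fun x _ => sum_nonneg fun y _ => by
    split_ifs
    exacts [mul_nonneg (hπ x) (hP x y), le_rfl]

theorem sum_projEdgeMass [Fintype β] (hProw : ∀ x, ∑ y, P x y = 1) (z : β) :
    ∑ w, projEdgeMass r π P z w = projMass r π z := by
  unfold projEdgeMass projMass
  rw [sum_comm]
  refine sum_congr rfl fun x _ => ?_
  rw [sum_comm]
  simp [ite_and, ← mul_sum, hProw]

theorem projMass_mul_projKernel (hπ : ∀ x, 0 < π x) (hr : Function.Surjective r) (z w : β) :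
    projMass r π z * projKernel r π P z w = projEdgeMass r π P z w :=
  mul_div_cancel₀ _ (projMass_pos hπ hr z).ne'

theorem projKernel_nonneg (hπ : ∀ x, 0 ≤ π x) (hP : ∀ x y, 0 ≤ P x y) (z w : β) :
    0 ≤ projKernel r π P z w :=
  div_nonneg (projEdgeMass_nonneg hπ hP z w)
    (sum_nonneg fun x _ => by split_ifs; exacts [hπ x, le_rfl])

theorem projKernel_pos (hπ : ∀ x, 0 < π x) (hr : Function.Surjective r) {z w : β}
    (h : 0 < projEdgeMass r π P z w) : 0 < projKernel r π P z w :=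
  div_pos h (projMass_pos hπ hr z)

theorem sum_projKernel [Fintype β] (hπ : ∀ x, 0 < π x) (hr : Function.Surjective r)
    (hProw : ∀ x, ∑ y, P x y = 1) (z : β) : ∑ w, projKernel r π P z w = 1 := by
  simp_rw [projKernel]
  rw [← sum_div, sum_projEdgeMass hProw, div_self (projMass_pos hπ hr z).ne']

theorem sum_projEdgeMass_mul [Fintype β] (h : β → β → ℝ) :
    ∑ z, ∑ w, projEdgeMass r π P z w * h z w = ∑ x, ∑ y, π x * P x y * h (r x) (r y) := by
  simp only [projEdgeMass, sum_mul, ite_mul, zero_mul]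
  rw [sum_comm]
  simp_rw [sum_comm (s := univ (α := β)) (t := univ (α := α))]
  exact sum_congr rfl fun x _ => sum_congr rfl fun y _ => by simp [ite_and]

theorem projEdgeMass_le_comp [DecidableEq γ] (hπ : ∀ x, 0 ≤ π x) (hP : ∀ x y, 0 ≤ P x y)
    (f : β → γ) (z w : β) : projEdgeMass r π P z w ≤ projEdgeMass (f ∘ r) π P (f z) (f w) :=
  sum_le_sum fun x _ => sum_le_sum fun y _ => by
    by_cases h : r x = z ∧ r y = w
    · simp [h]
    · rw [if_neg h]; split_ifs; exacts [mul_nonneg (hπ x) (hP x y), le_rfl]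

theorem projKernel_comp_pos [DecidableEq γ] (hπ : ∀ x, 0 < π x) (hP : ∀ x y, 0 ≤ P x y)
    {f : β → γ} (hfr : Function.Surjective (f ∘ r)) {z w : β}
    (h : 0 < projEdgeMass r π P z w) : 0 < projKernel (f ∘ r) π P (f z) (f w) :=
  projKernel_pos hπ hfr (h.trans_le (projEdgeMass_le_comp (fun x => (hπ x).le) hP f z w))

theorem klRate_projKernel [Fintype β] (hπ : ∀ x, 0 < π x) (hr : Function.Surjective r)
    (L : β → β → ℝ) :
    klRate (projMass r π) (projKernel r π P) L =
      ∑ z, ∑ w, projEdgeMass r π P z w * Real.log (projKernel r π P z w / L z w) := by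
  simp only [klRate, projMass_mul_projKernel hπ hr]

end Projection

theorem Finset.sum_pi_insert_mul {ι : Type*} [DecidableEq ι] {𝒴 : ι → Type*}
    [∀ i, Fintype (𝒴 i)] {S : Finset ι} {e : ι} (heS : e ∉ S)
    (f : (∀ i : S, 𝒴 i) → ℝ) (g : 𝒴 e → ℝ) :
    ∑ w : ∀ i : (insert e S : Finset ι), 𝒴 i,
        f (restrict₂ (subset_insert e S) w) * g (w ⟨e, mem_insert_self e S⟩) =
      (∑ u, f u) * ∑ a, g a := by
  let E := ((Equiv.piCongrLeft' (fun i : (insert e S : Finset ι) => 𝒴 i)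
    (subtypeInsertEquivOption heS)).trans Equiv.piOptionEquivProd).trans (Equiv.prodComm _ _)
  rw [sum_mul_sum, ← Fintype.sum_prod_type']
  exact Fintype.sum_equiv E _ (fun p => f p.1 * g p.2) fun w => rfl

theorem restrict_surjective (𝒳 : Fin d → Type) [∀ i, Nonempty (𝒳 i)] (S : Finset (Fin d)) :
    Function.Surjective (restrict 𝒳 S) :=
  Subtype.surjective_restrict (· ∈ S)

section Coordinates

variable (𝒳 : Fin d → Type) [∀ i, Fintype (𝒳 i)] {π : (∀ i, 𝒳 i) → ℝ}
  {P : (∀ i, 𝒳 i) → (∀ i, 𝒳 i) → ℝ}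

theorem marginal_eq_projMass (S : Finset (Fin d)) :
    marginal 𝒳 π S = projMass (restrict 𝒳 S) π := rfl

theorem keepIn_eq_projKernel (S : Finset (Fin d)) :
    keepIn 𝒳 π P S = projKernel (restrict 𝒳 S) π P := rfl

theorem single_eq_projKernel (i : Fin d) :
    single 𝒳 π P i = projKernel (fun x => x i) π P := rfl

theorem indepKernel_insert {S : Finset (Fin d)} {e : Fin d} (heS : e ∉ S)
    (z w : ∀ i : (insert e S : Finset (Fin d)), 𝒳 i) :
    indepKernel 𝒳 π P (insert e S) z w =
      indepKernel 𝒳 π P S (restrict₂ (subset_insert e S) z) (restrict₂ (subset_insert e S) w) *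
        single 𝒳 π P e (z ⟨e, mem_insert_self e S⟩) (w ⟨e, mem_insert_self e S⟩) := by
  rw [indepKernel, ← (subtypeInsertEquivOption heS).symm.prod_comp, Fintype.prod_option,
    mul_comm]
  rfl

variable [∀ i, Nonempty (𝒳 i)]

theorem sum_splitKernel (hπ : ∀ x, 0 < π x) (hProw : ∀ x, ∑ y, P x y = 1) {S : Finset (Fin d)}
    {e : Fin d} (heS : e ∉ S) (z : ∀ i : (insert e S : Finset (Fin d)), 𝒳 i) :
    ∑ w, splitKernel 𝒳 π P S e z w = 1 := by
  simp only [splitKernel, keepIn_eq_projKernel, single_eq_projKernel]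
  refine (sum_pi_insert_mul heS _ _).trans ?_
  rw [sum_projKernel hπ (restrict_surjective 𝒳 S) hProw,
    sum_projKernel hπ (Function.surjective_eval e) hProw, one_mul]

theorem keepIn_restrict₂_pos (hπ : ∀ x, 0 < π x) (hP : ∀ x y, 0 ≤ P x y)
    {S T : Finset (Fin d)} (hST : S ⊆ T) {z w : ∀ i : T, 𝒳 i}
    (hzw : 0 < projEdgeMass (restrict 𝒳 T) π P z w) :
    0 < keepIn 𝒳 π P S (restrict₂ hST z) (restrict₂ hST w) :=
  projKernel_comp_pos (r := restrict 𝒳 T) (f := restrict₂ hST) hπ hP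
    (restrict_surjective 𝒳 S) hzw

theorem single_pos (hπ : ∀ x, 0 < π x) (hP : ∀ x y, 0 ≤ P x y) {T : Finset (Fin d)}
    {z w : ∀ i : T, 𝒳 i} (hzw : 0 < projEdgeMass (restrict 𝒳 T) π P z w) {i : Fin d}
    (hi : i ∈ T) : 0 < single 𝒳 π P i (z ⟨i, hi⟩) (w ⟨i, hi⟩) :=
  projKernel_comp_pos (r := restrict 𝒳 T) (f := fun u => u ⟨i, hi⟩) hπ hP
    (Function.surjective_eval i) hzw

theorem indepKernel_restrict₂_pos (hπ : ∀ x, 0 < π x) (hP : ∀ x y, 0 ≤ P x y)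
    {S T : Finset (Fin d)} (hST : S ⊆ T) {z w : ∀ i : T, 𝒳 i}
    (hzw : 0 < projEdgeMass (restrict 𝒳 T) π P z w) :
    0 < indepKernel 𝒳 π P S (restrict₂ hST z) (restrict₂ hST w) :=
  prod_pos fun i _ => single_pos 𝒳 hπ hP hzw (hST i.2)

theorem splitKernel_pos (hπ : ∀ x, 0 < π x) (hP : ∀ x y, 0 ≤ P x y) {S : Finset (Fin d)}
    {e : Fin d} {z w : ∀ i : (insert e S : Finset (Fin d)), 𝒳 i}
    (hzw : 0 < projEdgeMass (restrict 𝒳 (insert e S)) π P z w) :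
    0 < splitKernel 𝒳 π P S e z w :=
  mul_pos (keepIn_restrict₂_pos 𝒳 hπ hP (subset_insert e S) hzw)
    (single_pos 𝒳 hπ hP hzw (mem_insert_self e S))

theorem projEdgeMass_mul_log_div_indepKernel_insert (hπ : ∀ x, 0 < π x)
    (hP : ∀ x y, 0 ≤ P x y) {S : Finset (Fin d)} {e : Fin d} (heS : e ∉ S)
    (z w : ∀ i : (insert e S : Finset (Fin d)), 𝒳 i) :
    projEdgeMass (restrict 𝒳 (insert e S)) π P z w *
        Real.log (keepIn 𝒳 π P (insert e S) z w / indepKernel 𝒳 π P (insert e S) z w) =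
      projEdgeMass (restrict 𝒳 (insert e S)) π P z w *
          Real.log (keepIn 𝒳 π P S (restrict₂ (subset_insert e S) z)
              (restrict₂ (subset_insert e S) w) /
            indepKernel 𝒳 π P S (restrict₂ (subset_insert e S) z)
              (restrict₂ (subset_insert e S) w)) +
        projEdgeMass (restrict 𝒳 (insert e S)) π P z w *
          Real.log (keepIn 𝒳 π P (insert e S) z w / splitKernel 𝒳 π P S e z w) := by
  rcases (projEdgeMass_nonneg (r := restrict 𝒳 (insert e S)) (fun x => (hπ x).le) hP z
    w).eq_or_lt with hzw | hzw
  · simp [← hzw]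
  have log_div_mul {a b c u : ℝ} (ha : a ≠ 0) (hb : b ≠ 0) (hc : c ≠ 0) (hu : u ≠ 0) :
      Real.log (a / (b * c)) = Real.log (u / b) + Real.log (a / (u * c)) := by
    rw [Real.log_div ha (mul_ne_zero hb hc), Real.log_div hu hb,
      Real.log_div ha (mul_ne_zero hu hc), Real.log_mul hb hc, Real.log_mul hu hc]
    ring
  rw [← mul_add, indepKernel_insert 𝒳 heS]
  exact congrArg _ (log_div_mul
    (projKernel_pos hπ (restrict_surjective 𝒳 _) hzw).ne'
    (indepKernel_restrict₂_pos 𝒳 hπ hP _ hzw).ne'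
    (single_pos 𝒳 hπ hP hzw (mem_insert_self e S)).ne'
    (keepIn_restrict₂_pos 𝒳 hπ hP _ hzw).ne')

theorem distToIndep_insert (hπ : ∀ x, 0 < π x) (hP : ∀ x y, 0 ≤ P x y) {S : Finset (Fin d)}
    {e : Fin d} (heS : e ∉ S) :
    distToIndep 𝒳 π P (insert e S) = distToIndep 𝒳 π P S + dSplit 𝒳 π P S e := by
  -- the `S`-log-ratio depends on the `S`-coordinates only, so it can be averaged under the
  -- edge law on `S ∪ {e}` instead of the one on `S`
  have hS : distToIndep 𝒳 π P S = ∑ z, ∑ w, projEdgeMass (restrict 𝒳 (insert e S)) π P z w *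
      Real.log (keepIn 𝒳 π P S (restrict₂ (subset_insert e S) z)
          (restrict₂ (subset_insert e S) w) /
        indepKernel 𝒳 π P S (restrict₂ (subset_insert e S) z)
          (restrict₂ (subset_insert e S) w)) := by
    rw [distToIndep, marginal_eq_projMass, keepIn_eq_projKernel,
      klRate_projKernel hπ (restrict_surjective 𝒳 S), sum_projEdgeMass_mul, sum_projEdgeMass_mul]
    rfl
  rw [distToIndep, dSplit, marginal_eq_projMass, keepIn_eq_projKernel,
    klRate_projKernel hπ (restrict_surjective 𝒳 _),
    klRate_projKernel hπ (restrict_surjective 𝒳 _), hS, ← sum_add_distrib]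
  refine sum_congr rfl fun z _ => ?_
  rw [← sum_add_distrib]
  exact sum_congr rfl fun w _ => projEdgeMass_mul_log_div_indepKernel_insert 𝒳 hπ hP heS z w

theorem dSplit_nonneg (hπ : ∀ x, 0 < π x) (hP : ∀ x y, 0 ≤ P x y)
    (hProw : ∀ x, ∑ y, P x y = 1) {S : Finset (Fin d)} {e : Fin d} (heS : e ∉ S) :
    0 ≤ dSplit 𝒳 π P S e := by
  have hπ₀ (x : ∀ i, 𝒳 i) : 0 ≤ π x := (hπ x).le
  have hQ (z w : ∀ i : (insert e S : Finset (Fin d)), 𝒳 i) :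
      keepIn 𝒳 π P (insert e S) z w ≠ 0 → 0 < projEdgeMass (restrict 𝒳 (insert e S)) π P z w :=
    fun h => (projEdgeMass_nonneg hπ₀ hP z w).lt_of_ne' (div_ne_zero_iff.1 h).1
  refine klRate_nonneg (fun z => (projMass_pos hπ (restrict_surjective 𝒳 _) z).le)
    (fun z w => projKernel_nonneg hπ₀ hP z w)
    (fun z w => mul_nonneg (projKernel_nonneg hπ₀ hP _ _) (projKernel_nonneg hπ₀ hP _ _))
    (fun z => ?_) (fun z w h => (splitKernel_pos 𝒳 hπ hP (hQ z w h)).ne')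
  rw [sum_splitKernel 𝒳 hπ hProw heS, keepIn_eq_projKernel,
    sum_projKernel hπ (restrict_surjective 𝒳 _) hProw]

end Coordinates

theorem Fintype.sum_comp_update_sub {ι α M : Type*} [Fintype ι] [DecidableEq ι]
    [AddCommGroup M] (F : α → M) (S : ι → α) (i : ι) (A : α) :
    ∑ l, F (Function.update S i A l) - ∑ l, F (S l) = F A - F (S i) := by
  simp_rw [← Function.comp_apply (f := F), Function.comp_update]
  rw [sum_update_of_mem (mem_univ i), ← add_sum_erase _ _ (mem_univ i),
    sdiff_singleton_eq_erase]
  simp only [Function.comp_apply]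
  abel

theorem distToIndep_sum_pairwise_monotone_general
    (𝒳 : Fin d → Type) [∀ i, Fintype (𝒳 i)] [∀ i, Nonempty (𝒳 i)]
    (π : (∀ i, 𝒳 i) → ℝ) (P : (∀ i, 𝒳 i) → (∀ i, 𝒳 i) → ℝ)
    (hπpos : ∀ x, 0 < π x)
    (hPnonneg : ∀ x y, 0 ≤ P x y) (hProw : ∀ x, ∑ y, P x y = 1)
    (k : ℕ) (S : Fin k → Finset (Fin d))
    (e : Fin d) (he : e ∉ Finset.univ.biUnion S)
    (i j : Fin k) :
    ((∑ l, distToIndep 𝒳 π P (Function.update S i (insert e (S i)) l)) -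
          (∑ l, distToIndep 𝒳 π P (S l)) +
        ((∑ l, distToIndep 𝒳 π P (Function.update S j (insert e (S j)) l)) -
          (∑ l, distToIndep 𝒳 π P (S l))) =
      dSplit 𝒳 π P (S i) e + dSplit 𝒳 π P (S j) e) ∧
    0 ≤ (∑ l, distToIndep 𝒳 π P (Function.update S i (insert e (S i)) l)) -
          (∑ l, distToIndep 𝒳 π P (S l)) +
        ((∑ l, distToIndep 𝒳 π P (Function.update S j (insert e (S j)) l)) -
          (∑ l, distToIndep 𝒳 π P (S l))) := by
  have heS (l : Fin k) : e ∉ S l := fun h => he (mem_biUnion.2 ⟨l, mem_univ l, h⟩)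
  have hΔ (l : Fin k) : ∑ m, distToIndep 𝒳 π P (Function.update S l (insert e (S l)) m) -
      ∑ m, distToIndep 𝒳 π P (S m) = dSplit 𝒳 π P (S l) e := by
    rw [Fintype.sum_comp_update_sub (distToIndep 𝒳 π P),
      distToIndep_insert 𝒳 hπpos hPnonneg (heS l), add_sub_cancel_left]
  rw [hΔ i, hΔ j]
  exact ⟨rfl, add_nonneg (dSplit_nonneg 𝒳 hπpos hPnonneg hProw (heS i))
    (dSplit_nonneg 𝒳 hπpos hPnonneg hProw (heS j))⟩

/-- The map `f(𝐒) = 𝕀(⊗_{i=1}^k P^(S_i)) = Σ_{i=1}^k 𝕀(P^(S_i))` is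
pairwise monotonically non-decreasing: for `e ∉ supp 𝐒` and `i ≠ j`,
`Δ_{e,i} f(𝐒) + Δ_{e,j} f(𝐒)
  = D(P^(S_i ∪ {e}) ‖ P^(S_i) ⊗ P^(e)) + D(P^(S_j ∪ {e}) ‖ P^(S_j) ⊗ P^(e)) ≥ 0`. -/
theorem distToIndep_sum_pairwise_monotone
    (𝒳 : Fin d → Type) [∀ i, Fintype (𝒳 i)] [∀ i, Nonempty (𝒳 i)]
    (π : (∀ i, 𝒳 i) → ℝ) (P : (∀ i, 𝒳 i) → (∀ i, 𝒳 i) → ℝ)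
    (hπpos : ∀ x, 0 < π x) (hπsum : ∑ x, π x = 1)
    (hPnonneg : ∀ x y, 0 ≤ P x y) (hProw : ∀ x, ∑ y, P x y = 1)
    (hstat : ∀ y, ∑ x, π x * P x y = π y)
    (k : ℕ) (S : Fin k → Finset (Fin d)) (hS : PwDisj S)
    (e : Fin d) (he : e ∉ Finset.univ.biUnion S)
    (i j : Fin k) (hij : i ≠ j) :
    ((∑ l, distToIndep 𝒳 π P (Function.update S i (insert e (S i)) l)) -
          (∑ l, distToIndep 𝒳 π P (S l)) +
        ((∑ l, distToIndep 𝒳 π P (Function.update S j (insert e (S j)) l)) -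
          (∑ l, distToIndep 𝒳 π P (S l))) =
      dSplit 𝒳 π P (S i) e + dSplit 𝒳 π P (S j) e) ∧
    0 ≤ (∑ l, distToIndep 𝒳 π P (Function.update S i (insert e (S i)) l)) -
          (∑ l, distToIndep 𝒳 π P (S l)) +
        ((∑ l, distToIndep 𝒳 π P (Function.update S j (insert e (S j)) l)) -
          (∑ l, distToIndep 𝒳 π P (S l))) :=
  distToIndep_sum_pairwise_monotone_general 𝒳 π P hπpos hPnonneg hProw k S e he i j

end
end

section
/- Let P be a π-stationary transition matrix on the finite product state space X = X^(1) × … × X^(d), and let Π be the transition matrix on X whose every row equals π. Then the map S ↦ D(P^(S) ‖ Π^(S)) on subsets S ⊆ ⟦d⟧ is monotonically non-decreasing: D(P^(S) ‖ Π^(S)) ≤ D(P^(T) ‖ Π^(T)) whenever S ⊆ T ⊆ ⟦d⟧. -/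
open scoped Classical

noncomputable section

variable {d : ℕ}

/-!
Let `J(x, y) = π(x) P(x, y)` and `Q(x, y) = π(x) π(y)`, and let `ρ_S(x, y) = (x^(S), y^(S))`.
Then `π^(S)(z) P^(S)(z, w)` is the pushforward of `J` along `ρ_S` and `π^(S)(z) π^(S)(w)` that
of `Q`, so `D(P^(S) ‖ Π^(S))` is the Kullback–Leibler divergence between these two pushforwards.
For `S ⊆ T`, `ρ_S` factors through `ρ_T`, and monotonicity is the data processing inequality for
pushforwards, which on each fibre is the log-sum inequality (Jensen for `t log t`).
-/

theorem sum_mul_log_div_sum_le {ι : Type*} (s : Finset ι) {a b : ι → ℝ}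
    (ha : ∀ i ∈ s, 0 ≤ a i) (hb : ∀ i ∈ s, 0 ≤ b i) (hab : ∀ i ∈ s, b i = 0 → a i = 0) :
    (∑ i ∈ s, a i) * Real.log ((∑ i ∈ s, a i) / ∑ i ∈ s, b i) ≤
      ∑ i ∈ s, a i * Real.log (a i / b i) := by
  set t := s.filter (fun i => b i ≠ 0)
  have hA : ∑ i ∈ t, a i = ∑ i ∈ s, a i :=
    Finset.sum_filter_of_ne fun i hi h hb0 => h (hab i hi hb0)
  have hB : ∑ i ∈ t, b i = ∑ i ∈ s, b i := Finset.sum_filter_of_ne fun _ _ h => h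
  have hR : ∑ i ∈ t, a i * Real.log (a i / b i) = ∑ i ∈ s, a i * Real.log (a i / b i) :=
    Finset.sum_filter_of_ne fun i hi h hb0 => h (by simp [hab i hi hb0])
  rw [← hA, ← hB, ← hR]
  have hbt : ∀ i ∈ t, 0 < b i := fun i hi =>
    (hb i (Finset.mem_filter.1 hi).1).lt_of_ne' (Finset.mem_filter.1 hi).2
  rcases t.eq_empty_or_nonempty with ht | ht
  · simp [ht]
  set A := ∑ i ∈ t, a i
  set B := ∑ i ∈ t, b i
  have hBpos : 0 < B := Finset.sum_pos hbt ht
  have hJ := Real.convexOn_mul_log.map_sum_le (t := t) (w := fun i => b i / B)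
    (p := fun i => a i / b i)
    (fun i hi => (div_pos (hbt i hi) hBpos).le)
    (by rw [← Finset.sum_div, div_self hBpos.ne'])
    (fun i hi => Set.mem_Ici.2 (div_nonneg (ha i (Finset.mem_filter.1 hi).1) (hbt i hi).le))
  simp only [smul_eq_mul] at hJ
  have hmean : ∑ i ∈ t, b i / B * (a i / b i) = A / B := by
    rw [Finset.sum_div]
    exact Finset.sum_congr rfl fun i hi => by field_simp [(hbt i hi).ne']
  have hweighted : ∑ i ∈ t, b i / B * (a i / b i * Real.log (a i / b i)) =
      (∑ i ∈ t, a i * Real.log (a i / b i)) / B := by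
    rw [Finset.sum_div]
    exact Finset.sum_congr rfl fun i hi => by field_simp [(hbt i hi).ne']
  rw [hmean, hweighted, le_div_iff₀ hBpos] at hJ
  calc A * Real.log (A / B) = A / B * Real.log (A / B) * B := by field_simp
    _ ≤ _ := hJ

section Pushforward

variable {W Z Y : Type*} [Fintype W]

def pushforward (f : W → Z) (p : W → ℝ) (z : Z) : ℝ :=
  ∑ w with f w = z, p w

def klSum (p q : W → ℝ) : ℝ :=
  ∑ w, p w * Real.log (p w / q w)

theorem pushforward_nonneg (f : W → Z) {p : W → ℝ} (hp : ∀ w, 0 ≤ p w) (z : Z) :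
    0 ≤ pushforward f p z :=
  Finset.sum_nonneg fun w _ => hp w

theorem pushforward_eq_zero_of_absCont (f : W → Z) {p q : W → ℝ} (hq : ∀ w, 0 ≤ q w)
    (hpq : ∀ w, q w = 0 → p w = 0) {z : Z} (hz : pushforward f q z = 0) :
    pushforward f p z = 0 :=
  Finset.sum_eq_zero fun w hw =>
    hpq w ((Finset.sum_eq_zero_iff_of_nonneg fun w _ => hq w).1 hz w hw)

theorem pushforward_comp [Fintype Z] (g : Z → Y) (f : W → Z) (p : W → ℝ) :
    pushforward (g ∘ f) p = pushforward g (pushforward f p) := by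
  funext y
  simp only [pushforward, Function.comp_apply]
  rw [← Finset.sum_fiberwise_of_maps_to (g := f) (t := Finset.univ.filter fun z => g z = y)
    (fun w hw => by simpa using hw)]
  refine Finset.sum_congr rfl fun z hz => ?_
  rw [Finset.filter_filter]
  refine Finset.sum_congr (Finset.filter_congr fun w _ => ?_) fun _ _ => rfl
  constructor
  · exact fun h => h.2
  · rintro rfl; exact ⟨(Finset.mem_filter.1 hz).2, rfl⟩

theorem pushforward_prodMap_mul (f : W → Z) (p q : W → ℝ) (z w : Z) :
    pushforward (Prod.map f f) (fun xy => p xy.1 * q xy.2) (z, w) =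
      pushforward f p z * pushforward f q w := by
  rw [pushforward, pushforward, pushforward, Finset.sum_mul_sum, ← Finset.sum_product',
    ← Finset.filter_product, Finset.univ_product_univ]
  simp only [Prod.map, Prod.mk.injEq]

theorem klSum_pushforward_le [Fintype Y] (g : W → Y) {p q : W → ℝ} (hp : ∀ w, 0 ≤ p w)
    (hq : ∀ w, 0 ≤ q w) (hpq : ∀ w, q w = 0 → p w = 0) :
    klSum (pushforward g p) (pushforward g q) ≤ klSum p q := by
  rw [klSum, klSum, ← Finset.sum_fiberwise Finset.univ g]
  exact Finset.sum_le_sum fun y _ =>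
    sum_mul_log_div_sum_le _ (fun w _ => hp w) (fun w _ => hq w) (fun w _ => hpq w)

end Pushforward

theorem klRate_div_eq_klSum {Y : Type*} [Fintype Y] (μ : Y → ℝ) (N : Y × Y → ℝ)
    (hN : ∀ z w, μ z = 0 → N (z, w) = 0) :
    klRate μ (fun z w => N (z, w) / μ z) (fun _ w => μ w) =
      klSum N (fun zw => μ zw.1 * μ zw.2) := by
  rw [klRate, klSum, Fintype.sum_prod_type]
  refine Finset.sum_congr rfl fun z _ => Finset.sum_congr rfl fun w _ => ?_
  by_cases hz : μ z = 0
  · simp [hz, hN z w hz]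
  · rw [div_div, mul_div_cancel₀ _ hz]

section KeepIn

variable (𝒳 : Fin d → Type) [∀ i, Fintype (𝒳 i)] (π : (∀ i, 𝒳 i) → ℝ)
  (P : (∀ i, 𝒳 i) → (∀ i, 𝒳 i) → ℝ)

theorem marginal_eq_pushforward (S : Finset (Fin d)) :
    marginal 𝒳 π S = pushforward (restrict 𝒳 S) π :=
  funext fun _ => by rw [marginal, pushforward, Finset.sum_filter]; congr!

theorem keepIn_eq_pushforward_div (S : Finset (Fin d)) :
    keepIn 𝒳 π P S = fun z w =>
      pushforward (Prod.map (restrict 𝒳 S) (restrict 𝒳 S))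
        (fun xy => π xy.1 * P xy.1 xy.2) (z, w) / marginal 𝒳 π S z := by
  funext z w
  rw [keepIn, pushforward, Finset.sum_filter, Fintype.sum_prod_type]
  simp only [Prod.map, Prod.mk.injEq]

theorem distToStat_eq_klSum (hπ : ∀ x, 0 < π x) (S : Finset (Fin d)) :
    distToStat 𝒳 π P S =
      klSum
        (pushforward (Prod.map (restrict 𝒳 S) (restrict 𝒳 S)) (fun xy => π xy.1 * P xy.1 xy.2))
        (pushforward (Prod.map (restrict 𝒳 S) (restrict 𝒳 S)) (fun xy => π xy.1 * π xy.2)) := by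
  have hQ :
      pushforward (Prod.map (restrict 𝒳 S) (restrict 𝒳 S)) (fun xy => π xy.1 * π xy.2) =
      fun zw => marginal 𝒳 π S zw.1 * marginal 𝒳 π S zw.2 := by
    funext zw
    rw [marginal_eq_pushforward, ← pushforward_prodMap_mul]
  rw [hQ, distToStat, keepIn_eq_pushforward_div, klRate_div_eq_klSum]
  intro z w hz
  refine pushforward_eq_zero_of_absCont _ (fun xy => (mul_pos (hπ xy.1) (hπ xy.2)).le)
    (fun xy h => absurd h (mul_pos (hπ xy.1) (hπ xy.2)).ne') ?_
  rw [hQ]; simp [hz]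

end KeepIn

theorem distToStat_monotone_general
    (𝒳 : Fin d → Type) [∀ i, Fintype (𝒳 i)]
    (π : (∀ i, 𝒳 i) → ℝ) (P : (∀ i, 𝒳 i) → (∀ i, 𝒳 i) → ℝ)
    (hπpos : ∀ x, 0 < π x)
    (hPnonneg : ∀ x y, 0 ≤ P x y) :
    ∀ S T : Finset (Fin d), S ⊆ T →
      distToStat 𝒳 π P S ≤ distToStat 𝒳 π P T := by
  intro S T hST
  let proj : (∀ i : T, 𝒳 i.1) → ∀ i : S, 𝒳 i.1 := fun z i => z ⟨i, hST i.2⟩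
  have hrestrict : Prod.map (restrict 𝒳 S) (restrict 𝒳 S) =
      Prod.map proj proj ∘ Prod.map (restrict 𝒳 T) (restrict 𝒳 T) := rfl
  have hQpos : ∀ xy : (∀ i, 𝒳 i) × (∀ i, 𝒳 i), 0 < π xy.1 * π xy.2 :=
    fun xy => mul_pos (hπpos xy.1) (hπpos xy.2)
  rw [distToStat_eq_klSum 𝒳 π P hπpos S, distToStat_eq_klSum 𝒳 π P hπpos T, hrestrict,
    pushforward_comp, pushforward_comp]
  exact klSum_pushforward_le _
    (pushforward_nonneg _ fun xy => mul_nonneg (hπpos xy.1).le (hPnonneg xy.1 xy.2))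
    (pushforward_nonneg _ fun xy => (hQpos xy).le)
    fun zw => pushforward_eq_zero_of_absCont _ (fun xy => (hQpos xy).le)
      fun xy h => absurd h (hQpos xy).ne'

/-- For a `π`-stationary transition matrix `P` on a finite product state
space, the map `S ↦ D(P^(S) ‖ Π^(S))` is monotonically non-decreasing. -/
theorem distToStat_monotone
    (𝒳 : Fin d → Type) [∀ i, Fintype (𝒳 i)] [∀ i, Nonempty (𝒳 i)]
    (π : (∀ i, 𝒳 i) → ℝ) (P : (∀ i, 𝒳 i) → (∀ i, 𝒳 i) → ℝ)
    (hπpos : ∀ x, 0 < π x) (hπsum : ∑ x, π x = 1)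
    (hPnonneg : ∀ x y, 0 ≤ P x y) (hProw : ∀ x, ∑ y, P x y = 1)
    (hstat : ∀ y, ∑ x, π x * P x y = π y) :
    ∀ S T : Finset (Fin d), S ⊆ T →
      distToStat 𝒳 π P S ≤ distToStat 𝒳 π P T :=
  distToStat_monotone_general 𝒳 π P hπpos hPnonneg

end
end

section
/- Let P be a π-stationary transition matrix on the finite product state space X = X^(1) × … × X^(d), where π is of product form, i.e. π = ⊗_{i=1}^d π^(i). Then the map S ↦ D(P^(S) ‖ Π^(S)) on subsets S ⊆ ⟦d⟧ is supermodular. -/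
open scoped Classical

noncomputable section

variable {d : ℕ}

/-! `D(P^(S) ‖ Π^(S))` is the mutual information `H(X_S) + H(Y_S) - H(X_S, Y_S)` between the
`S`-coordinates of two consecutive states `(X, Y) ~ π(x) P(x, y)` of the stationary chain, and by
stationarity both `X_S` and `Y_S` have law `π^(S)`. For product-form `π` the entropy `H(X_S)` is
additive over the coordinates in `S`, hence modular, while `S ↦ H(X_S, Y_S)` is the joint entropy of
the coordinate pairs `(X_i, Y_i)`, `i ∈ S`, hence submodular by Shannon's inequality
`H(A, B, C) + H(C) ≤ H(A, C) + H(B, C)`, itself a consequence of `log t ≤ t - 1`. -/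

section PushMass

variable {Ω κ ν : Type*} [Fintype Ω] [DecidableEq κ] [DecidableEq ν]

def pushMass (q : Ω → ℝ) (k : Ω → κ) (t : κ) : ℝ :=
  ∑ ω, if k ω = t then q ω else 0

def entropy [Fintype κ] (p : κ → ℝ) : ℝ :=
  -∑ t, p t * Real.log (p t)

theorem sum_pushMass_mul [Fintype κ] (q : Ω → ℝ) (k : Ω → κ) (Φ : κ → ℝ) :
    ∑ t, pushMass q k t * Φ t = ∑ ω, q ω * Φ (k ω) := by
  simp only [pushMass, Finset.sum_mul, ite_mul, zero_mul]
  rw [Finset.sum_comm]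
  simp

theorem sum_pushMass [Fintype κ] (q : Ω → ℝ) (k : Ω → κ) : ∑ t, pushMass q k t = ∑ ω, q ω := by
  simpa using sum_pushMass_mul q k 1

theorem pushMass_comp [Fintype κ] (q : Ω → ℝ) (k : Ω → κ) (φ : κ → ν) :
    pushMass q (φ ∘ k) = pushMass (pushMass q k) φ := by
  funext u
  simpa [pushMass, mul_ite] using (sum_pushMass_mul q k fun t => if φ t = u then 1 else 0).symm

theorem pushMass_nonneg {q : Ω → ℝ} (hq : ∀ ω, 0 ≤ q ω) (k : Ω → κ) (t : κ) :
    0 ≤ pushMass q k t :=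
  Finset.sum_nonneg fun ω _ => by split_ifs <;> simp [hq ω]

theorem le_pushMass_apply {q : Ω → ℝ} (hq : ∀ ω, 0 ≤ q ω) (k : Ω → κ) (ω : Ω) :
    q ω ≤ pushMass q k (k ω) := by
  simpa [pushMass] using Finset.single_le_sum (f := fun ω' => if k ω' = k ω then q ω' else 0)
    (fun ω' _ => by split_ifs <;> simp [hq ω']) (Finset.mem_univ ω)

theorem pushMass_apply_of_injective [Fintype κ] (p : κ → ℝ) {φ : κ → ν}
    (hφ : Function.Injective φ) (t : κ) : pushMass p φ (φ t) = p t := by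
  simp [pushMass, hφ.eq_iff]

theorem pushMass_snd_apply {α β : Type*} [Fintype α] [Fintype β] [DecidableEq β]
    (p : α × β → ℝ) (b : β) : pushMass p Prod.snd b = ∑ a, p (a, b) := by
  simp [pushMass, Fintype.sum_prod_type]

theorem entropy_pushMass [Fintype κ] (q : Ω → ℝ) (k : Ω → κ) :
    entropy (pushMass q k) = -∑ ω, q ω * Real.log (pushMass q k (k ω)) := by
  rw [entropy, sum_pushMass_mul q k fun t => Real.log (pushMass q k t)]

theorem entropy_pushMass_comp_of_injective [Fintype κ] [Fintype ν] (q : Ω → ℝ) (k : Ω → κ)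
    {φ : κ → ν} (hφ : Function.Injective φ) :
    entropy (pushMass q (φ ∘ k)) = entropy (pushMass q k) := by
  rw [pushMass_comp, entropy_pushMass (pushMass q k) φ]
  simp only [pushMass_apply_of_injective _ hφ]
  rfl

end PushMass

section Submodularity

open Real

variable {α β γ : Type*} [Fintype α] [Fintype β] [Fintype γ]
  [DecidableEq α] [DecidableEq β] [DecidableEq γ]

theorem entropy_triple_add_entropy_le (p : α × β × γ → ℝ) (hp : ∀ t, 0 ≤ p t) :
    entropy p + entropy (pushMass p fun t => t.2.2) ≤
      entropy (pushMass p fun t => (t.1, t.2.2)) + entropy (pushMass p Prod.snd) := by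
  set pAC := pushMass p fun t => (t.1, t.2.2)
  set pBC := pushMass p Prod.snd
  set pC := pushMass p fun t => t.2.2
  have pointwise : ∀ t, p t * (log (pAC (t.1, t.2.2)) + log (pBC t.2) - log (p t) - log (pC t.2.2))
      ≤ pAC (t.1, t.2.2) * pBC t.2 / pC t.2.2 - p t := by
    intro t
    rcases (hp t).eq_or_lt with h0 | hpos
    · rw [← h0, zero_mul, sub_zero]
      exact div_nonneg (mul_nonneg (pushMass_nonneg hp _ _) (pushMass_nonneg hp _ _))
        (pushMass_nonneg hp _ _)
    have hAC : 0 < pAC (t.1, t.2.2) := hpos.trans_le (le_pushMass_apply hp _ t)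
    have hBC : 0 < pBC t.2 := hpos.trans_le (le_pushMass_apply hp _ t)
    have hC : 0 < pC t.2.2 := hpos.trans_le (le_pushMass_apply hp _ t)
    have hlog : log (pAC (t.1, t.2.2)) + log (pBC t.2) - log (p t) - log (pC t.2.2)
        = log (pAC (t.1, t.2.2) * pBC t.2 / (p t * pC t.2.2)) := by
      rw [log_div (by positivity) (by positivity), log_mul hAC.ne' hBC.ne',
        log_mul hpos.ne' hC.ne']
      ring
    calc _ = p t * log (pAC (t.1, t.2.2) * pBC t.2 / (p t * pC t.2.2)) := by rw [hlog]
      _ ≤ p t * (pAC (t.1, t.2.2) * pBC t.2 / (p t * pC t.2.2) - 1) := by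
        gcongr
        exact log_le_sub_one_of_pos (by positivity)
      _ = _ := by field_simp
  have hAC_C : ∀ c, ∑ a, pAC (a, c) = pC c := fun c => by
    rw [← pushMass_snd_apply, ← pushMass_comp]
    rfl
  have hBC_C : pushMass pBC Prod.snd = pC := (pushMass_comp p Prod.snd Prod.snd).symm
  have total : ∑ t : α × β × γ, pAC (t.1, t.2.2) * pBC t.2 / pC t.2.2 = ∑ t, p t := by
    calc ∑ t : α × β × γ, pAC (t.1, t.2.2) * pBC t.2 / pC t.2.2
        = ∑ s : β × γ, (∑ a, pAC (a, s.2)) * pBC s / pC s.2 := by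
          rw [Fintype.sum_prod_type, Finset.sum_comm]
          simp only [Finset.sum_mul, Finset.sum_div]
      _ = ∑ s : β × γ, pBC s * (pC s.2 / pC s.2) := by
          simp only [hAC_C, mul_div_assoc, mul_comm]
      _ = ∑ c, pC c * (pC c / pC c) := by
          rw [← sum_pushMass_mul pBC Prod.snd fun c => pC c / pC c, hBC_C]
      _ = ∑ t, p t := by simp only [← mul_div_assoc, mul_self_div_self, pC, sum_pushMass]
  have hsum := Finset.sum_le_sum fun t (_ : t ∈ Finset.univ) => pointwise t
  simp only [mul_add, mul_sub, Finset.sum_add_distrib, Finset.sum_sub_distrib, total] at hsum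
  rw [entropy, entropy_pushMass, entropy_pushMass, entropy_pushMass]
  linarith

end Submodularity

section Coordinates

variable {Ω ι : Type*} [Fintype Ω] [DecidableEq ι] {Y : ι → Type*} [∀ i, Fintype (Y i)]
  [∀ i, DecidableEq (Y i)]

theorem entropy_pushMass_restrict_submodular (q : Ω → ℝ) (hq : ∀ ω, 0 ≤ q ω)
    (k : Ω → ∀ i, Y i) (S T : Finset ι) :
    entropy (pushMass q ((S ∩ T).restrict ∘ k)) + entropy (pushMass q ((S ∪ T).restrict ∘ k)) ≤
      entropy (pushMass q (S.restrict ∘ k)) + entropy (pushMass q (T.restrict ∘ k)) := by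
  have hIS : S ∩ T ⊆ S := Finset.inter_subset_left
  have hIT : S ∩ T ⊆ T := Finset.inter_subset_right
  have hSU : S ⊆ S ∪ T := Finset.subset_union_left
  have hTU : T ⊆ S ∪ T := Finset.subset_union_right
  set p := pushMass q fun ω => (S.restrict (k ω), T.restrict (k ω), (S ∩ T).restrict (k ω))
  have hinj : Function.Injective fun u : (∀ i : ↥(S ∪ T), Y i) =>
      (Finset.restrict₂ hSU u, Finset.restrict₂ hTU u, Finset.restrict₂ (hIS.trans hSU) u) := by
    intro u v huv
    funext ⟨i, hi⟩
    rcases Finset.mem_union.1 hi with hiS | hiT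
    · exact congrFun (congrArg Prod.fst huv) ⟨i, hiS⟩
    · exact congrFun (congrArg (·.2.1) huv) ⟨i, hiT⟩
  have hU : entropy p = entropy (pushMass q ((S ∪ T).restrict ∘ k)) := by
    rw [← entropy_pushMass_comp_of_injective q ((S ∪ T).restrict ∘ k) hinj]
    rfl
  have hS : entropy (pushMass p fun t => (t.1, t.2.2)) = entropy (pushMass q (S.restrict ∘ k)) := by
    rw [← pushMass_comp]
    exact entropy_pushMass_comp_of_injective q _ (φ := fun z => (z, Finset.restrict₂ hIS z))
      fun _ _ h => congrArg Prod.fst h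
  have hT : entropy (pushMass p Prod.snd) = entropy (pushMass q (T.restrict ∘ k)) := by
    rw [← pushMass_comp]
    exact entropy_pushMass_comp_of_injective q _ (φ := fun z => (z, Finset.restrict₂ hIT z))
      fun _ _ h => congrArg Prod.fst h
  have hI : entropy (pushMass p fun t => t.2.2) = entropy (pushMass q ((S ∩ T).restrict ∘ k)) := by
    rw [← pushMass_comp]
    rfl
  have key := entropy_triple_add_entropy_le p (pushMass_nonneg hq _)
  linarith

end Coordinates

section ProductForm

variable {ι : Type*} [Fintype ι] [DecidableEq ι] {Y : ι → Type*} [∀ i, Fintype (Y i)]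
  [∀ i, DecidableEq (Y i)]

theorem pushMass_restrict_apply_of_eq_prod (p : (∀ i, Y i) → ℝ) (r : ∀ i, Y i → ℝ)
    (hp : ∀ x, p x = ∏ i, r i (x i)) (hr : ∀ i, ∑ a, r i a = 1) (S : Finset ι)
    (x : ∀ i, Y i) : pushMass p S.restrict (S.restrict x) = ∏ i ∈ S, r i (x i) := by
  have hfactor : ∀ y : ∀ i, Y i, (if S.restrict y = S.restrict x then p y else 0) =
      ∏ i, if i ∈ S → y i = x i then r i (y i) else 0 := by
    intro y
    rw [Fintype.prod_ite_zero, hp]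
    exact if_congr ⟨fun h i hi => congrFun h ⟨i, hi⟩, fun h => funext fun i => h i i.2⟩ rfl rfl
  have hsum : ∀ i, (∑ a, if i ∈ S → a = x i then r i a else 0) =
      if i ∈ S then r i (x i) else 1 := by
    intro i
    by_cases hi : i ∈ S <;> simp [hi, hr]
  simp only [pushMass, hfactor]
  rw [← Fintype.prod_sum fun i a => if i ∈ S → a = x i then r i a else 0]
  simp only [hsum]
  exact Fintype.prod_ite_mem S _

theorem entropy_pushMass_restrict_of_eq_prod (p : (∀ i, Y i) → ℝ)
    (hp : ∀ x, p x = ∏ i, pushMass p (fun x => x i) (x i)) (hsum : ∑ x, p x = 1)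
    (S : Finset ι) :
    entropy (pushMass p S.restrict) = ∑ i ∈ S, entropy (pushMass p fun x => x i) := by
  have hmarg := pushMass_restrict_apply_of_eq_prod p _ hp
    (fun i => (sum_pushMass p _).trans hsum) S
  have hlog : ∀ x, p x * Real.log (∏ i ∈ S, pushMass p (fun x => x i) (x i)) =
      ∑ i ∈ S, p x * Real.log (pushMass p (fun x => x i) (x i)) := by
    intro x
    by_cases h0 : p x = 0
    · simp [h0]
    have hne : ∀ i, pushMass p (fun x => x i) (x i) ≠ 0 :=
      fun i => Finset.prod_ne_zero_iff.1 (hp x ▸ h0) i (Finset.mem_univ i)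
    rw [Real.log_prod fun i _ => hne i, Finset.mul_sum]
  simp only [entropy_pushMass, hmarg, hlog]
  rw [Finset.sum_comm]
  simp [Finset.sum_neg_distrib]

end ProductForm

section EdgeMass

variable {X : Type*} [Fintype X] [DecidableEq X]

def edgeMass (π : X → ℝ) (P : X → X → ℝ) (ω : X × X) : ℝ :=
  π ω.1 * P ω.1 ω.2

theorem pushMass_edgeMass_fst {π : X → ℝ} {P : X → X → ℝ} (hProw : ∀ x, ∑ y, P x y = 1) :
    pushMass (edgeMass π P) Prod.fst = π := by
  funext x
  simp [pushMass, edgeMass, Fintype.sum_prod_type, ← Finset.mul_sum, hProw]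

theorem pushMass_edgeMass_snd {π : X → ℝ} {P : X → X → ℝ}
    (hstat : ∀ y, ∑ x, π x * P x y = π y) : pushMass (edgeMass π P) Prod.snd = π := by
  funext y
  simp [pushMass, edgeMass, Fintype.sum_prod_type, hstat]

end EdgeMass

section KeepIn

variable (𝒳 : Fin d → Type) [∀ i, Fintype (𝒳 i)] (π : (∀ i, 𝒳 i) → ℝ)
  (P : (∀ i, 𝒳 i) → (∀ i, 𝒳 i) → ℝ)

theorem marginal_eq_pushMass (S : Finset (Fin d)) : marginal 𝒳 π S = pushMass π S.restrict :=
  rfl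

theorem keepIn_eq (S : Finset (Fin d)) (z w : ∀ i : S, 𝒳 i) :
    keepIn 𝒳 π P S z w = pushMass (edgeMass π P)
      (Prod.map (restrict 𝒳 S) (restrict 𝒳 S)) (z, w) / marginal 𝒳 π S z := by
  simp [keepIn, pushMass, edgeMass, Fintype.sum_prod_type]

end KeepIn

section DistToStat

variable (𝒳 : Fin d → Type) [∀ i, Fintype (𝒳 i)] [∀ i, Nonempty (𝒳 i)]
  {π : (∀ i, 𝒳 i) → ℝ} (P : (∀ i, 𝒳 i) → (∀ i, 𝒳 i) → ℝ)

theorem marginal_pos (hπpos : ∀ x, 0 < π x) (S : Finset (Fin d)) (z : ∀ i : S, 𝒳 i) :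
    0 < marginal 𝒳 π S z := by
  let x : ∀ i, 𝒳 i := fun i => if h : i ∈ S then z ⟨i, h⟩ else Classical.arbitrary _
  have hx : S.restrict x = z := funext fun i => dif_pos i.2
  rw [marginal_eq_pushMass, ← hx]
  exact (hπpos x).trans_le (le_pushMass_apply (fun x => (hπpos x).le) _ x)

theorem distToStat_eq_entropy (hπpos : ∀ x, 0 < π x) (hProw : ∀ x, ∑ y, P x y = 1)
    (hstat : ∀ y, ∑ x, π x * P x y = π y) (S : Finset (Fin d)) :
    distToStat 𝒳 π P S = 2 * entropy (marginal 𝒳 π S) -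
      entropy (pushMass (edgeMass π P) (Prod.map (restrict 𝒳 S) (restrict 𝒳 S))) := by
  set m := pushMass (edgeMass π P) (Prod.map (restrict 𝒳 S) (restrict 𝒳 S))
  set μ := marginal 𝒳 π S
  have hμ := marginal_pos 𝒳 hπpos S
  have hm_fst : pushMass m Prod.fst = μ := by
    rw [← pushMass_comp]
    change pushMass _ (restrict 𝒳 S ∘ Prod.fst) = _
    rw [pushMass_comp, pushMass_edgeMass_fst hProw]
    rfl
  have hm_snd : pushMass m Prod.snd = μ := by
    rw [← pushMass_comp]
    change pushMass _ (restrict 𝒳 S ∘ Prod.snd) = _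
    rw [pushMass_comp, pushMass_edgeMass_snd hstat]
    rfl
  have pointwise : ∀ s : (∀ i : S, 𝒳 i) × (∀ i : S, 𝒳 i),
      μ s.1 * keepIn 𝒳 π P S s.1 s.2 * Real.log (keepIn 𝒳 π P S s.1 s.2 / μ s.2) =
        m s * Real.log (m s) - m s * Real.log (μ s.1) - m s * Real.log (μ s.2) := by
    intro s
    rw [keepIn_eq]
    by_cases h0 : m s = 0
    · simp [m, h0]
    rw [mul_div_cancel₀ _ (hμ s.1).ne', div_div,
      Real.log_div h0 (mul_ne_zero (hμ _).ne' (hμ _).ne'), Real.log_mul (hμ _).ne' (hμ _).ne']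
    ring
  have hlog_fst : ∑ s, m s * Real.log (μ s.1) = -entropy μ := by
    rw [← sum_pushMass_mul m Prod.fst fun z => Real.log (μ z), hm_fst, entropy, neg_neg]
  have hlog_snd : ∑ s, m s * Real.log (μ s.2) = -entropy μ := by
    rw [← sum_pushMass_mul m Prod.snd fun z => Real.log (μ z), hm_snd, entropy, neg_neg]
  calc distToStat 𝒳 π P S
      = ∑ s, (m s * Real.log (m s) - m s * Real.log (μ s.1) - m s * Real.log (μ s.2)) := by
        rw [distToStat, klRate, ← Fintype.sum_prod_type']
        exact Finset.sum_congr rfl fun s _ => pointwise s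
    _ = 2 * entropy μ - entropy m := by
        rw [Finset.sum_sub_distrib, Finset.sum_sub_distrib, hlog_fst, hlog_snd]
        unfold entropy
        ring

end DistToStat

/-- The pair `(X_S, Y_S)` is encoded as the restriction to `S` of the family of coordinate pairs
`(X_i, Y_i)`. -/
theorem distToStat_eq_of_product_form (𝒳 : Fin d → Type) [∀ i, Fintype (𝒳 i)]
    [∀ i, Nonempty (𝒳 i)] (π : (∀ i, 𝒳 i) → ℝ) (P : (∀ i, 𝒳 i) → (∀ i, 𝒳 i) → ℝ)
    (hπpos : ∀ x, 0 < π x) (hπsum : ∑ x, π x = 1) (hProw : ∀ x, ∑ y, P x y = 1)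
    (hstat : ∀ y, ∑ x, π x * P x y = π y)
    (hprod : ∀ x : ∀ i, 𝒳 i, π x = ∏ i, singleMarginal 𝒳 π i (x i)) (S : Finset (Fin d)) :
    distToStat 𝒳 π P S = 2 * ∑ i ∈ S, entropy (singleMarginal 𝒳 π i) -
      entropy (pushMass (edgeMass π P)
        (S.restrict ∘ (Equiv.arrowProdEquivProdArrow _ 𝒳 𝒳).symm)) := by
  rw [distToStat_eq_entropy 𝒳 P hπpos hProw hstat, marginal_eq_pushMass,
    entropy_pushMass_restrict_of_eq_prod π hprod hπsum,
    ← entropy_pushMass_comp_of_injective _ _ (Equiv.arrowProdEquivProdArrow _ _ _).injective]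
  rfl

/-- If `P` is `π`-stationary and `π` is of product form
(`π = ⊗_{i=1}^d π^(i)`), then the map `S ↦ D(P^(S) ‖ Π^(S))` is supermodular. -/
theorem distToStat_supermodular_of_product_form
    (𝒳 : Fin d → Type) [∀ i, Fintype (𝒳 i)] [∀ i, Nonempty (𝒳 i)]
    (π : (∀ i, 𝒳 i) → ℝ) (P : (∀ i, 𝒳 i) → (∀ i, 𝒳 i) → ℝ)
    (hπpos : ∀ x, 0 < π x) (hπsum : ∑ x, π x = 1)
    (hPnonneg : ∀ x y, 0 ≤ P x y) (hProw : ∀ x, ∑ y, P x y = 1)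
    (hstat : ∀ y, ∑ x, π x * P x y = π y)
    (hprod : ∀ x : ∀ i, 𝒳 i, π x = ∏ i, singleMarginal 𝒳 π i (x i)) :
    ∀ S T : Finset (Fin d),
      distToStat 𝒳 π P S + distToStat 𝒳 π P T ≤
        distToStat 𝒳 π P (S ∩ T) + distToStat 𝒳 π P (S ∪ T) := by
  intro S T
  have hsub := entropy_pushMass_restrict_submodular (edgeMass π P)
    (fun ω => mul_nonneg (hπpos _).le (hPnonneg _ _)) (Equiv.arrowProdEquivProdArrow _ 𝒳 𝒳).symm S T
  have hmod := Finset.sum_union_inter (s₁ := S) (s₂ := T)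
    (f := fun i => entropy (singleMarginal 𝒳 π i))
  simp only [distToStat_eq_of_product_form 𝒳 π P hπpos hπsum hProw hstat hprod]
  linarith
end
end
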